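/- arXiv:1011.0541 — 2 statements merged into one kernel-verified Lean document; each statement's English description precedes it below -/
import Mathlib

section
/- Let T > 0 and a, b, c > 0. Let X and Y be identically distributed real-valued random variables on a probability space with E[X⁴] ≤ b·T² and E[(X − Y)²] ≥ a·T. Then E[|X − Y|] ≥ (1/(2c))·(a − 2^{5/2}·b^{3/4}/c)·T^{1/2}. -/
/-!
Truncating at a level `N > 0` gives `z² ≤ N|z| + |z|³/N`, hence `E Z² ≤ N E|Z| + E|Z|³/N` for
`Z = X - Y`. Lyapunov's inequality, `(x - y)⁴ ≤ 8 (x⁴ + y⁴)` and `E Y⁴ = E X⁴` bound the last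
moment: `E|Z|³ ≤ (E Z⁴)^{3/4} ≤ (16 b T²)^{3/4} = 8 b^{3/4} T^{3/2}`. Taking `N = 2c√T` yields
`E|Z| ≥ (a - 4 b^{3/4}/c) √T / (2c)`, which is stronger than the claim because `4 ≤ 2^{5/2}`.
-/

open MeasureTheory ProbabilityTheory

section Moments

variable {α : Type*} [MeasurableSpace α] {μ : Measure α}

theorem sq_le_mul_abs_add_abs_pow_three_div {N : ℝ} (hN : 0 < N) (z : ℝ) :
    z ^ 2 ≤ N * |z| + |z| ^ 3 / N := by
  rw [← sq_abs, ← sub_le_iff_le_add', le_div_iff₀ hN]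
  nlinarith [mul_nonneg (abs_nonneg z) (sq_nonneg (|z| - N))]

theorem integral_sq_le_mul_integral_abs_add_div [IsFiniteMeasure μ] {Z : α → ℝ}
    (hZ : MemLp Z 3 μ) {N : ℝ} (hN : 0 < N) :
    ∫ x, Z x ^ 2 ∂μ ≤ N * ∫ x, |Z x| ∂μ + (∫ x, |Z x| ^ 3 ∂μ) / N := by
  have h1 : Integrable (fun x => |Z x|) μ := (hZ.integrable (by norm_num)).abs
  have h2 : Integrable (fun x => Z x ^ 2) μ := (hZ.mono_exponent (by norm_num)).integrable_sq
  have h3 : Integrable (fun x => |Z x| ^ 3) μ := by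
    simpa using hZ.integrable_norm_pow' (p := 3)
  rw [← integral_const_mul, ← integral_div, ← integral_add (h1.const_mul N) (h3.div_const N)]
  exact integral_mono h2 ((h1.const_mul N).add (h3.div_const N))
    fun x => sq_le_mul_abs_add_abs_pow_three_div hN (Z x)

theorem integral_norm_rpow_le_integral_norm_rpow_rpow [IsProbabilityMeasure μ] {E : Type*}
    [NormedAddCommGroup E] {f : α → E} {p q : ℝ} (hp : 0 < p) (hpq : p ≤ q)
    (hf : MemLp f (ENNReal.ofReal q) μ) :
    ∫ x, ‖f x‖ ^ p ∂μ ≤ (∫ x, ‖f x‖ ^ q ∂μ) ^ (p / q) := by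
  have hq : 0 < q := hp.trans_le hpq
  have hle : eLpNorm f (ENNReal.ofReal p) μ ≤ eLpNorm f (ENNReal.ofReal q) μ :=
    eLpNorm_le_eLpNorm_of_exponent_le (ENNReal.ofReal_le_ofReal hpq) hf.aestronglyMeasurable
  rw [(hf.mono_exponent (ENNReal.ofReal_le_ofReal hpq)).eLpNorm_eq_integral_rpow_norm
      (by simpa using hp) ENNReal.ofReal_ne_top,
    hf.eLpNorm_eq_integral_rpow_norm (by simpa using hq) ENNReal.ofReal_ne_top,
    ENNReal.toReal_ofReal hp.le, ENNReal.toReal_ofReal hq.le,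
    ENNReal.ofReal_le_ofReal_iff (by positivity)] at hle
  have hIp : 0 ≤ ∫ x, ‖f x‖ ^ p ∂μ := integral_nonneg fun x => by positivity
  have hIq : 0 ≤ ∫ x, ‖f x‖ ^ q ∂μ := integral_nonneg fun x => by positivity
  calc ∫ x, ‖f x‖ ^ p ∂μ = ((∫ x, ‖f x‖ ^ p ∂μ) ^ p⁻¹) ^ p := by
        rw [← Real.rpow_mul hIp, inv_mul_cancel₀ hp.ne', Real.rpow_one]
    _ ≤ ((∫ x, ‖f x‖ ^ q ∂μ) ^ q⁻¹) ^ p := by gcongr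
    _ = (∫ x, ‖f x‖ ^ q ∂μ) ^ (p / q) := by
        rw [← Real.rpow_mul hIq, inv_mul_eq_div]

theorem integral_abs_pow_three_le [IsProbabilityMeasure μ] {Z : α → ℝ} (hZ : MemLp Z 4 μ) :
    ∫ x, |Z x| ^ 3 ∂μ ≤ (∫ x, Z x ^ 4 ∂μ) ^ (3 / 4 : ℝ) := by
  have := integral_norm_rpow_le_integral_norm_rpow_rpow (p := 3) (q := 4) (by norm_num)
    (by norm_num) (by simpa using hZ)
  norm_num [Real.norm_eq_abs] at this
  simpa only [Even.pow_abs (by decide : Even 4)] using this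

theorem integral_sq_le_mul_integral_abs_add_rpow_div [IsProbabilityMeasure μ] {Z : α → ℝ}
    (hZ : MemLp Z 4 μ) {N : ℝ} (hN : 0 < N) :
    ∫ x, Z x ^ 2 ∂μ ≤ N * ∫ x, |Z x| ∂μ + (∫ x, Z x ^ 4 ∂μ) ^ (3 / 4 : ℝ) / N :=
  (integral_sq_le_mul_integral_abs_add_div (hZ.mono_exponent (by norm_num)) hN).trans
    (by gcongr; exact integral_abs_pow_three_le hZ)

theorem sub_pow_four_le (x y : ℝ) : (x - y) ^ 4 ≤ 8 * (x ^ 4 + y ^ 4) := by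
  nlinarith [sq_nonneg (x + y), sq_nonneg (x ^ 2 - y ^ 2), sq_nonneg ((x + y) ^ 2)]

theorem memLp_four_of_integrable_pow_four {X : α → ℝ} (hX : AEStronglyMeasurable X μ)
    (h4 : Integrable (fun x => X x ^ 4) μ) : MemLp X 4 μ := by
  rw [← integrable_norm_rpow_iff hX (by norm_num) (by norm_num)]
  refine h4.congr (.of_forall fun x => ?_)
  norm_num [Real.norm_eq_abs, Even.pow_abs (by decide : Even 4)]

theorem ProbabilityTheory.IdentDistrib.integral_sub_pow_four_le {X Y : α → ℝ}
    (hid : IdentDistrib X Y μ μ) (h4 : Integrable (fun x => X x ^ 4) μ) :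
    ∫ x, (X x - Y x) ^ 4 ∂μ ≤ 16 * ∫ x, X x ^ 4 ∂μ := by
  have hid4 : IdentDistrib (fun x => X x ^ 4) (fun x => Y x ^ 4) μ μ :=
    hid.comp (measurable_id.pow_const 4)
  have hY4 : Integrable (fun x => Y x ^ 4) μ := hid4.integrable_snd h4
  have hZ4 : Integrable (fun x => (X x - Y x) ^ 4) μ :=
    ((h4.add hY4).const_mul 8).mono'
      ((hid.aemeasurable_fst.sub hid.aemeasurable_snd).pow_const 4).aestronglyMeasurable
      (.of_forall fun x => by
        rw [Real.norm_of_nonneg (by positivity)]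
        exact sub_pow_four_le (X x) (Y x))
  calc ∫ x, (X x - Y x) ^ 4 ∂μ ≤ ∫ x, 8 * (X x ^ 4 + Y x ^ 4) ∂μ :=
        integral_mono hZ4 ((h4.add hY4).const_mul 8) fun x => sub_pow_four_le (X x) (Y x)
    _ = 16 * ∫ x, X x ^ 4 ∂μ := by
        rw [integral_const_mul, integral_add h4 hY4, ← hid4.integral_eq]
        ring

end Moments

theorem sixteen_mul_mul_sq_rpow_three_fourths {b T : ℝ} (hb : 0 ≤ b) (hT : 0 ≤ T) :
    (16 * b * T ^ 2) ^ (3 / 4 : ℝ) = 8 * b ^ (3 / 4 : ℝ) * T * √T := by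
  have h16 : 16 * b * T ^ 2 = b * (2 * √T) ^ 4 := by
    rw [mul_pow, show √T ^ 4 = (√T ^ 2) ^ 2 by ring, Real.sq_sqrt hT]
    ring
  rw [h16, Real.mul_rpow hb (by positivity), ← Real.rpow_natCast,
    ← Real.rpow_mul (by positivity)]
  norm_num
  rw [mul_pow, show √T ^ 3 = √T ^ 2 * √T by ring, Real.sq_sqrt hT]
  ring

theorem stmt_6_general {Ω : Type*} [MeasureSpace Ω] [IsProbabilityMeasure (ℙ : Measure Ω)]
    (T a b c : ℝ) (hT : 0 < T) (hb : 0 < b) (hc : 0 < c)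
    (X Y : Ω → ℝ) (hid : IdentDistrib X Y ℙ ℙ)
    (h4 : Integrable fun ω => X ω ^ 4)
    (hX4 : ∫ ω, X ω ^ 4 ≤ b * T ^ 2)
    (h2 : a * T ≤ ∫ ω, (X ω - Y ω) ^ 2) :
    (1 / (2 * c)) * (a - 2 ^ (5 / 2 : ℝ) * b ^ (3 / 4 : ℝ) / c) * T ^ (1 / 2 : ℝ)
      ≤ ∫ ω, |X ω - Y ω| := by
  rw [← Real.sqrt_eq_rpow]
  set m := ∫ ω, |X ω - Y ω|
  set β := b ^ (3 / 4 : ℝ)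
  have hX : MemLp X 4 :=
    memLp_four_of_integrable_pow_four hid.aemeasurable_fst.aestronglyMeasurable h4
  have hZ : MemLp (fun ω => X ω - Y ω) 4 := hX.sub (hid.memLp_snd hX)
  have hs : 0 < √T := Real.sqrt_pos.2 hT
  have hZ4 : ∫ ω, (X ω - Y ω) ^ 4 ≤ 16 * b * T ^ 2 := by
    linarith [hid.integral_sub_pow_four_le h4]
  have key : a * T ≤ 2 * c * √T * m + 4 * β * T / c :=
    calc a * T ≤ ∫ ω, (X ω - Y ω) ^ 2 := h2
      _ ≤ 2 * c * √T * m + (∫ ω, (X ω - Y ω) ^ 4) ^ (3 / 4 : ℝ) / (2 * c * √T) :=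
        integral_sq_le_mul_integral_abs_add_rpow_div hZ (by positivity)
      _ ≤ 2 * c * √T * m + (16 * b * T ^ 2) ^ (3 / 4 : ℝ) / (2 * c * √T) := by
        gcongr
      _ = 2 * c * √T * m + 4 * β * T / c := by
        rw [sixteen_mul_mul_sq_rpow_three_fourths hb.le hT.le]
        field_simp
        ring
  have h25 : (4 : ℝ) ≤ 2 ^ (5 / 2 : ℝ) :=
    calc (4 : ℝ) = 2 ^ (2 : ℝ) := by norm_num
      _ ≤ 2 ^ (5 / 2 : ℝ) := Real.rpow_le_rpow_of_exponent_le (by norm_num) (by norm_num)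
  rw [one_div_mul_eq_div, div_mul_eq_mul_div, div_le_iff₀ (by positivity)]
  calc (a - 2 ^ (5 / 2 : ℝ) * β / c) * √T ≤ (a - 4 * β / c) * √T := by gcongr
    _ ≤ m * (2 * c) := by
      rw [← mul_le_mul_iff_of_pos_right hs, mul_assoc, Real.mul_self_sqrt hT.le]
      linear_combination key

/-- For `T > 0`, `a, b, c > 0` and identically distributed `X, Y` with `E[X⁴] ≤ b·T²`
and `E[(X − Y)²] ≥ a·T`, one has `E[|X − Y|] ≥ (1/(2c))·(a − 2^{5/2}·b^{3/4}/c)·T^{1/2}`. -/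
theorem stmt_6 {Ω : Type*} [MeasureSpace Ω] [IsProbabilityMeasure (ℙ : Measure Ω)]
    (T a b c : ℝ) (hT : 0 < T) (ha : 0 < a) (hb : 0 < b) (hc : 0 < c)
    (X Y : Ω → ℝ) (hid : IdentDistrib X Y ℙ ℙ)
    (h4 : Integrable fun ω => X ω ^ 4)
    (hX4 : ∫ ω, X ω ^ 4 ≤ b * T ^ 2)
    (h2 : a * T ≤ ∫ ω, (X ω - Y ω) ^ 2) :
    (1 / (2 * c)) * (a - 2 ^ (5 / 2 : ℝ) * b ^ (3 / 4 : ℝ) / c) * T ^ (1 / 2 : ℝ)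
      ≤ ∫ ω, |X ω - Y ω| :=
  stmt_6_general T a b c hT hb hc X Y hid h4 hX4 h2
end

section
/- Let x : ℕ → [0,∞] be a sequence of extended nonnegative reals and let n ∈ ℕ. Then (Σ_{l=0}^∞ x_l)^n = Σ_k (n!/Π_l k_l!)·Π_l x_l^{k_l}, where the (countable) sum on the right runs over all finitely supported functions k : ℕ → ℕ with Σ_{l=0}^∞ k_l = n. -/
/-!
Both sides are suprema of finite partial sums in `[0,∞]`. For a finite `s`, the finite
multinomial theorem expands `(∑ l ∈ s, x l) ^ n` as the sum over the `k` supported in `s`, and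
every finite family of `k`'s is supported in some finite `s`; since `· ^ n` commutes with
suprema in `[0,∞]`, the two suprema agree.
-/

open scoped ENNReal
open Finset

theorem Finset.sum_pow_eq_sum_finsuppAntidiag {ι R : Type*} [DecidableEq ι] [CommSemiring R]
    (s : Finset ι) (f : ι → R) (n : ℕ) :
    (∑ i ∈ s, f i) ^ n =
      ∑ k ∈ s.finsuppAntidiag n, (k.multinomial : R) * k.prod fun i m => f i ^ m := by
  rw [sum_pow_eq_sum_piAntidiag, finsuppAntidiag, sum_map, ← sum_attach]
  refine sum_congr rfl fun k _ => ?_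
  rw [← Finsupp.multinomial_of_support_subset (s := s) (by simp),
    Finsupp.prod_of_support_subset _ (s := s) (by simp) _ fun _ _ => pow_zero _]
  rfl

theorem ENNReal.tsum_sum_eq_eq_iSup_sum_finsuppAntidiag {ι : Type*} [DecidableEq ι] (n : ℕ)
    (g : (ι →₀ ℕ) → ℝ≥0∞) :
    ∑' k : {k : ι →₀ ℕ // k.sum (fun _ m => m) = n}, g k
      = ⨆ s : Finset ι, ∑ k ∈ finsuppAntidiag s n, g k := by
  rw [ENNReal.tsum_eq_iSup_sum' fun s : Finset ι => (s.finsuppAntidiag n).subtype _]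
  · exact iSup_congr fun s => sum_subtype_of_mem g fun k hk => (mem_finsuppAntidiag'.1 hk).1
  · intro t
    refine ⟨t.biUnion fun k => k.1.support, fun k hk => ?_⟩
    simp only [mem_subtype, mem_finsuppAntidiag']
    exact ⟨k.2, subset_biUnion_of_mem (fun k : {k : ι →₀ ℕ // _} => k.1.support) hk⟩

/-- Infinite multinomial identity in `[0,∞]`: for `x : ℕ → [0,∞]` and `n ∈ ℕ`,
`(Σ_l x_l)^n = Σ_k (n!/Π_l k_l!)·Π_l x_l^{k_l}`, the sum running over all finitely
supported `k : ℕ → ℕ` with `Σ_l k_l = n`. -/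
theorem stmt_12 (x : ℕ → ℝ≥0∞) (n : ℕ) :
    (∑' l, x l) ^ n
      = ∑' k : {k : ℕ →₀ ℕ // k.sum (fun _ m => m) = n},
          (Nat.multinomial (k : ℕ →₀ ℕ).support (k : ℕ →₀ ℕ) : ℝ≥0∞) *
            (k : ℕ →₀ ℕ).prod fun l m => x l ^ m := by
  simp_rw [← Finsupp.multinomial_eq]
  rw [ENNReal.tsum_sum_eq_eq_iSup_sum_finsuppAntidiag n
      (fun k => (k.multinomial : ℝ≥0∞) * k.prod fun l m => x l ^ m),
    ENNReal.tsum_eq_iSup_sum, ENNReal.iSup_pow]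
  simp_rw [sum_pow_eq_sum_finsuppAntidiag]
end
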